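/- arXiv:1607.08420 — 2 statements merged into one kernel-verified Lean document; each statement's English description precedes it below -/
import Mathlib

section
/- Let φ_k(x) = c_k(L_k(x) − L_{k+2}(x)) with c_k = 1/√(4k+6), where L_n is the n-th Legendre polynomial. Then the stiffness entries a_{jk} = ∫_{−1}^{1} φ_k'(x) φ_j'(x) dx satisfy a_{jk} = 1 if j = k and a_{jk} = 0 if j ≠ k. -/
open Polynomial

/-- The `n`-th Legendre polynomial, via Rodrigues' formula. -/
noncomputable def legendre (n : ℕ) : Polynomial ℝ :=
  C ((1 : ℝ) / (2 ^ n * n.factorial)) * derivative^[n] ((X ^ 2 - 1) ^ n)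

/-- The basis function φ_k(x) = c_k (L_k(x) - L_{k+2}(x)), c_k = 1/√(4k+6). -/
noncomputable def phi (k : ℕ) (x : ℝ) : ℝ :=
  (1 / Real.sqrt (4 * k + 6)) * ((legendre k).eval x - (legendre (k + 2)).eval x)

/-!
Differentiating Rodrigues' formula twice gives `L'_{k+2} - L'_k = (2k+3) L_{k+1}`, so
`φ_k' = -c_k (2k+3) L_{k+1}` and `a_{jk} = c_j c_k (2j+3)(2k+3) ∫ L_{j+1} L_{k+1}`.
Since `±1` are `n`-fold roots of `(x² - 1)^n`, integrating by parts `n` times gives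
`∫ p L_n = (2^n n!)⁻¹ ∫ p^{(n)} (1 - x²)^n` for every polynomial `p`. This vanishes when
`deg p < n`, and for `p = L_n` it reduces to `∫ (1 - x²)^n = 2^{2n+1} (n!)² / (2n+1)!`, whence
`∫ L_n² = 2/(2n+1)` and `a_{kk} = c_k² (2k+3)² · 2/(2k+3) = 1`.
-/

open Nat intervalIntegral

namespace Polynomial

section CommSemiring

variable {R : Type*} [CommSemiring R]

theorem isRoot_iterate_derivative_pow {p : R[X]} {x : R} (hx : p.IsRoot x) {j n : ℕ}
    (h : j < n) : (derivative^[j] (p ^ n)).IsRoot x := by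
  obtain ⟨q, hq⟩ := pow_sub_dvd_iterate_derivative_pow p n j
  rw [IsRoot, hq, eval_mul, eval_pow, hx.eq_zero, zero_pow (by omega), zero_mul]

theorem iterate_derivative_natDegree (p : R[X]) :
    derivative^[p.natDegree] p = C (p.natDegree ! • p.leadingCoeff) := by
  rw [eq_C_of_natDegree_le_zero ((natDegree_iterate_derivative p _).trans (Nat.sub_self _).le),
    coeff_iterate_derivative, zero_add, Nat.descFactorial_self, leadingCoeff]

end CommSemiring

theorem integral_eval_mul_eval_derivative (p q : ℝ[X]) (a b : ℝ) :
    ∫ x in a..b, p.eval x * (derivative q).eval x =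
      p.eval b * q.eval b - p.eval a * q.eval a - ∫ x in a..b, (derivative p).eval x * q.eval x :=
  integral_mul_deriv_eq_deriv_mul (fun x _ ↦ p.hasDerivAt x) (fun x _ ↦ q.hasDerivAt x)
    ((derivative p).continuous.intervalIntegrable _ _)
    ((derivative q).continuous.intervalIntegrable _ _)

theorem integral_eval_mul_eval_iterate_derivative {a b : ℝ} {n : ℕ} (p q : ℝ[X])
    (hq : ∀ j < n, (derivative^[j] q).IsRoot a ∧ (derivative^[j] q).IsRoot b) :
    ∫ x in a..b, p.eval x * (derivative^[n] q).eval x =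
      (-1) ^ n * ∫ x in a..b, (derivative^[n] p).eval x * q.eval x := by
  induction n generalizing p with
  | zero => simp
  | succ n ih =>
    obtain ⟨hqa, hqb⟩ := hq n n.lt_succ_self
    rw [Function.iterate_succ_apply', integral_eval_mul_eval_derivative, hqa.eq_zero,
      hqb.eq_zero, ih _ fun j hj ↦ hq j (by omega), Function.iterate_succ_apply]
    ring

theorem natDegree_sq_sub_one_pow (n : ℕ) : ((X ^ 2 - 1 : ℝ[X]) ^ n).natDegree = 2 * n := by
  rw [natDegree_pow, ← C_1, natDegree_X_pow_sub_C, mul_comm]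

theorem monic_sq_sub_one_pow (n : ℕ) : ((X ^ 2 - 1 : ℝ[X]) ^ n).Monic :=
  (monic_X_pow_sub_C (1 : ℝ) two_ne_zero).pow n

theorem derivative_derivative_sq_sub_one_pow_add_two (n : ℕ) :
    derivative (derivative ((X ^ 2 - 1 : ℝ[X]) ^ (n + 2))) =
      C ((2 * n + 4) * (2 * n + 3) : ℝ) * (X ^ 2 - 1) ^ (n + 1) +
        C ((2 * n + 4) * (2 * n + 2) : ℝ) * (X ^ 2 - 1) ^ n := by
  simp only [derivative_pow, cast_add, cast_ofNat, map_add, map_natCast, C_ofNat,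
    Nat.add_one_sub_one, derivative_sub, pow_one, derivative_X, mul_one, derivative_one, sub_zero,
    derivative_mul, derivative_natCast, derivative_ofNat, add_zero, zero_mul,
    cast_one, map_one, add_tsub_cancel_right, zero_add, map_mul]
  ring

end Polynomial

theorem integral_one_sub_sq_pow_succ (n : ℕ) :
    (2 * n + 3 : ℝ) * ∫ x in (-1 : ℝ)..1, (1 - x ^ 2) ^ (n + 1) =
      (2 * n + 2) * ∫ x in (-1 : ℝ)..1, (1 - x ^ 2) ^ n := by
  have hibp := integral_eval_mul_eval_derivative X ((1 - X ^ 2) ^ (n + 1)) (-1) 1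
  have hintegrand : ∀ x : ℝ, x * (derivative ((1 - X ^ 2) ^ (n + 1))).eval x =
      2 * (n + 1) * ((1 - x ^ 2) ^ (n + 1) - (1 - x ^ 2) ^ n) := by
    intro x
    simp only [derivative_pow, cast_add, cast_one, map_add, map_natCast, map_one,
      add_tsub_cancel_right, derivative_sub, derivative_one, cast_ofNat, Nat.add_one_sub_one,
      pow_one, derivative_X, mul_one, zero_sub, mul_neg, eval_neg, eval_mul, eval_add,
      eval_natCast, eval_one, eval_pow, eval_sub, eval_X, eval_C]
    ring
  simp only [hintegrand, eval_X, eval_pow, eval_sub, eval_one, integral_const_mul] at hibp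
  rw [integral_sub ((by fun_prop : Continuous _).intervalIntegrable _ _)
    ((by fun_prop : Continuous _).intervalIntegrable _ _)] at hibp
  norm_num at hibp
  linarith

theorem integral_one_sub_sq_pow (n : ℕ) :
    ∫ x in (-1 : ℝ)..1, (1 - x ^ 2) ^ n = 2 ^ (2 * n + 1) * (n ! : ℝ) ^ 2 / (2 * n + 1)! := by
  induction n with
  | zero => norm_num
  | succ n ih =>
    have h := integral_one_sub_sq_pow_succ n
    rw [ih] at h
    rw [eq_div_iff (by positivity), show 2 * (n + 1) + 1 = 2 * n + 1 + 1 + 1 by ring,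
      Nat.factorial_succ (2 * n + 1 + 1), Nat.factorial_succ (2 * n + 1), Nat.factorial_succ n]
    field_simp at h
    push_cast
    linear_combination (2 * n + 2 : ℝ) * h

theorem integral_eval_mul_legendre (p : ℝ[X]) (n : ℕ) :
    ∫ x in (-1 : ℝ)..1, p.eval x * (legendre n).eval x =
      1 / (2 ^ n * n !) * ∫ x in (-1 : ℝ)..1, (derivative^[n] p).eval x * (1 - x ^ 2) ^ n := by
  have hroots : ∀ j < n, ∀ x : ℝ, x ^ 2 = 1 →
      (derivative^[j] ((X ^ 2 - 1 : ℝ[X]) ^ n)).IsRoot x :=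
    fun j hj x hx ↦ isRoot_iterate_derivative_pow (by simp [hx]) hj
  simp_rw [legendre, eval_mul, eval_C, mul_left_comm (p.eval _)]
  rw [integral_const_mul, integral_eval_mul_eval_iterate_derivative _ _
    fun j hj ↦ ⟨hroots j hj _ (by norm_num), hroots j hj _ (by norm_num)⟩,
    ← integral_const_mul]
  simp_rw [eval_pow, eval_sub, eval_X_pow, eval_one, mul_left_comm ((-1 : ℝ) ^ n), ← mul_pow]
  ring_nf

theorem natDegree_legendre_le (n : ℕ) : (legendre n).natDegree ≤ n :=
  (natDegree_C_mul_le _ _).trans <| (natDegree_iterate_derivative _ _).trans <| by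
    rw [natDegree_sq_sub_one_pow]; omega

theorem iterate_derivative_legendre_self (n : ℕ) :
    derivative^[n] (legendre n) = C (((2 * n)! : ℝ) / (2 ^ n * n !)) := by
  have h := iterate_derivative_natDegree ((X ^ 2 - 1 : ℝ[X]) ^ n)
  rw [natDegree_sq_sub_one_pow, (monic_sq_sub_one_pow n).leadingCoeff, nsmul_one] at h
  rw [legendre, iterate_derivative_C_mul, ← Function.iterate_add_apply, ← two_mul, h, ← C_mul]
  ring_nf

theorem integral_legendre_mul_legendre_of_lt {m n : ℕ} (h : m < n) :
    ∫ x in (-1 : ℝ)..1, (legendre m).eval x * (legendre n).eval x = 0 := by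
  rw [integral_eval_mul_legendre, iterate_derivative_eq_zero ((natDegree_legendre_le m).trans_lt h)]
  simp

theorem integral_legendre_mul_legendre_of_ne {m n : ℕ} (h : m ≠ n) :
    ∫ x in (-1 : ℝ)..1, (legendre m).eval x * (legendre n).eval x = 0 := by
  rcases h.lt_or_gt with h | h
  · exact integral_legendre_mul_legendre_of_lt h
  · simpa only [mul_comm] using integral_legendre_mul_legendre_of_lt h

theorem integral_legendre_mul_self (n : ℕ) :
    ∫ x in (-1 : ℝ)..1, (legendre n).eval x * (legendre n).eval x = 2 / (2 * n + 1) := by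
  simp_rw [integral_eval_mul_legendre, iterate_derivative_legendre_self, eval_C]
  rw [integral_const_mul, integral_one_sub_sq_pow, Nat.factorial_succ]
  push_cast
  field_simp
  ring

theorem derivative_legendre_add_two (n : ℕ) :
    derivative (legendre (n + 2)) =
      C (2 * n + 3 : ℝ) * legendre (n + 1) + derivative (legendre n) := by
  have hfac : ((n + 2)! : ℝ) = (n + 2) * (n + 1) * n ! := by
    push_cast [Nat.factorial_succ]; ring
  have hc₁ : 1 / (2 ^ (n + 2) * (n + 2)! : ℝ) * ((2 * n + 4) * (2 * n + 3)) =
      (2 * n + 3) * (1 / (2 ^ (n + 1) * (n + 1)!)) := by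
    rw [hfac, Nat.factorial_succ]; push_cast; field_simp; ring
  have hc₂ : 1 / (2 ^ (n + 2) * (n + 2)! : ℝ) * ((2 * n + 4) * (2 * n + 2)) =
      1 / (2 ^ n * n !) := by
    rw [hfac]; field_simp; ring
  simp only [legendre, derivative_C_mul, ← Function.iterate_succ_apply' derivative]
  rw [Function.iterate_succ_apply, Function.iterate_succ_apply,
    derivative_derivative_sq_sub_one_pow_add_two, iterate_map_add, iterate_derivative_C_mul,
    iterate_derivative_C_mul, mul_add, ← mul_assoc, ← mul_assoc, ← C_mul, ← C_mul,
    hc₁, hc₂, C_mul]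
  ring

theorem deriv_phi (k : ℕ) :
    deriv (phi k) = fun x ↦ -((2 * k + 3) / √(4 * k + 6)) * (legendre (k + 1)).eval x := by
  ext x
  have h : HasDerivAt (phi k) (1 / √(4 * k + 6) *
      ((derivative (legendre k)).eval x - (derivative (legendre (k + 2))).eval x)) x :=
    (((legendre k).hasDerivAt x).sub ((legendre (k + 2)).hasDerivAt x)).const_mul _
  rw [h.deriv, derivative_legendre_add_two, eval_add, eval_mul, eval_C]
  ring

/-- The stiffness matrix entries a_{jk} = ∫_{-1}^{1} φ_k'(x) φ_j'(x) dx equal δ_{jk}. -/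
theorem stiffness_entries (j k : ℕ) :
    (∫ x in (-1 : ℝ)..1, deriv (phi k) x * deriv (phi j) x) =
      if j = k then 1 else 0 := by
  simp_rw [deriv_phi, mul_mul_mul_comm _ (eval _ _), integral_const_mul]
  split_ifs with hjk
  · subst hjk
    have hsqrt : √(4 * j + 6 : ℝ) ^ 2 = 4 * j + 6 := Real.sq_sqrt (by positivity)
    rw [integral_legendre_mul_self, neg_mul_neg, ← sq, div_pow, hsqrt]
    push_cast
    field_simp
    ring
  · rw [integral_legendre_mul_legendre_of_ne (by omega), mul_zero]
end

section
/- Let V be a complex inner product space, let A: V × V → ℂ be a Hermitian sesquilinear form (A(u,v) = conj(A(v,u))), let ψ be a bounded real multiplication operator, and suppose θ, ρ: [t₀,T] → V are differentiable and satisfy −i(∂_t(θ+ρ), v) + γ A(θ+ρ, v) − (ψ(θ+ρ), v) = 0 for v = θ(t), with γ ∈ ℝ and A(ρ(t), θ(t)) = 0 for all t. Then (1/2) d/dt ‖θ‖² = −Re(∂_t ρ, θ) − Im(ψρ, θ). -/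
/-!
Pair the error equation with `θ` itself and take imaginary parts. The time-derivative term
`-i (∂ₜθ, θ)` contributes `-Re (∂ₜθ, θ) = -½ d/dt ‖θ‖²`, while `γ A(θ + ρ, θ) = γ A(θ, θ)` and
`(ψθ, θ)` are real because `A` is Hermitian and `ψ` is symmetric, so they drop out.
-/

open Complex
open scoped InnerProductSpace

theorem LinearMap.isSymmetric_of_inner_apply_eq_conj {𝕜 E : Type*} [RCLike 𝕜]
    [NormedAddCommGroup E] [InnerProductSpace 𝕜 E] {T : E →ₗ[𝕜] E}
    (hT : ∀ x y : E, inner 𝕜 (T x) y = starRingEnd 𝕜 (inner 𝕜 (T y) x)) : T.IsSymmetric :=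
  fun x y => by rw [hT, inner_conj_symm]

theorem HasDerivAt.norm_sq_of_complex {E : Type*}
    [NormedAddCommGroup E] [InnerProductSpace ℂ E] {f : ℝ → E} {f' : E} {t : ℝ}
    (hf : HasDerivAt f f' t) :
    HasDerivAt (fun s => ‖f s‖ ^ 2) (2 * (⟪f t, f'⟫_ℂ).re) t :=
  letI : InnerProductSpace ℝ E := InnerProductSpace.rclikeToReal ℂ E
  hf.norm_sq

theorem Complex.re_eq_of_neg_I_mul_add_add_sub_eq_zero {a b r c d : ℂ} (hr : r.im = 0)
    (hc : c.im = 0) (h : -I * (a + b) + r - (c + d) = 0) : a.re = -b.re - d.im := by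
  have him := congrArg im h
  simp only [sub_im, add_im, mul_im, neg_re, neg_im, I_re, I_im, add_re, hr, hc, zero_im] at him
  linarith

/-- The paper's inner product `(u, v)`, conjugate-linear in `v`, is `inner ℂ v u` here. -/
theorem energy_identity_general
    {V : Type*} [NormedAddCommGroup V] [InnerProductSpace ℂ V]
    (A : V → V → ℂ)
    (hherm : ∀ u v : V, A u v = starRingEnd ℂ (A v u))
    (hadd : ∀ u v w : V, A (u + v) w = A u w + A v w)
    (ψ : V →ₗ[ℂ] V)
    (hψreal : ∀ x y : V, (inner ℂ (ψ x) y : ℂ) = starRingEnd ℂ (inner ℂ (ψ y) x))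
    (γ t₀ T : ℝ)
    (θ ρ θ' ρ' : ℝ → V)
    (hθ : ∀ t ∈ Set.Icc t₀ T, HasDerivAt θ (θ' t) t)
    (heq : ∀ t ∈ Set.Icc t₀ T,
      -Complex.I * (inner ℂ (θ t) (θ' t + ρ' t) : ℂ) +
        (γ : ℂ) * A (θ t + ρ t) (θ t) -
        (inner ℂ (θ t) (ψ (θ t + ρ t)) : ℂ) = 0)
    (horth : ∀ t ∈ Set.Icc t₀ T, A (ρ t) (θ t) = 0) :
    ∀ t ∈ Set.Icc t₀ T,
      HasDerivAt (fun s => ‖θ s‖ ^ 2)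
        (2 * (-(inner ℂ (θ t) (ρ' t) : ℂ).re - (inner ℂ (θ t) (ψ (ρ t)) : ℂ).im)) t := by
  intro t ht
  have hA : (A (θ t) (θ t)).im = 0 := conj_eq_iff_im.mp (hherm _ _).symm
  have hψ : (inner ℂ (θ t) (ψ (θ t))).im = 0 :=
    (LinearMap.isSymmetric_of_inner_apply_eq_conj hψreal).im_inner_self_apply _
  have herr := heq t ht
  rw [hadd, horth t ht, add_zero, inner_add_right, map_add, inner_add_right] at herr
  have hre := re_eq_of_neg_I_mul_add_add_sub_eq_zero (by simp [hA]) hψ herr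
  simpa [hre] using HasDerivAt.norm_sq_of_complex (hθ t ht)

/-- Energy identity: taking the imaginary part of the error equation with test
    function v = θ gives (1/2) d/dt ‖θ‖² = -Re(∂_t ρ, θ) - Im(ψρ, θ).
    Here the paper's inner product (u, v), conjugate-linear in the second slot,
    is expressed as `inner v u` in Mathlib's convention. -/
theorem energy_identity
    {V : Type*} [NormedAddCommGroup V] [InnerProductSpace ℂ V]
    (A : V → V → ℂ)
    (hherm : ∀ u v : V, A u v = starRingEnd ℂ (A v u))
    (hadd : ∀ u v w : V, A (u + v) w = A u w + A v w)
    (ψ : V →ₗ[ℂ] V)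
    (hψreal : ∀ x y : V, (inner ℂ (ψ x) y : ℂ) = starRingEnd ℂ (inner ℂ (ψ y) x))
    (γ t₀ T : ℝ)
    (θ ρ θ' ρ' : ℝ → V)
    (hθ : ∀ t ∈ Set.Icc t₀ T, HasDerivAt θ (θ' t) t)
    (hρ : ∀ t ∈ Set.Icc t₀ T, HasDerivAt ρ (ρ' t) t)
    (heq : ∀ t ∈ Set.Icc t₀ T,
      -Complex.I * (inner ℂ (θ t) (θ' t + ρ' t) : ℂ) +
        (γ : ℂ) * A (θ t + ρ t) (θ t) -
        (inner ℂ (θ t) (ψ (θ t + ρ t)) : ℂ) = 0)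
    (horth : ∀ t ∈ Set.Icc t₀ T, A (ρ t) (θ t) = 0) :
    ∀ t ∈ Set.Icc t₀ T,
      HasDerivAt (fun s => ‖θ s‖ ^ 2)
        (2 * (-(inner ℂ (θ t) (ρ' t) : ℂ).re - (inner ℂ (θ t) (ψ (ρ t)) : ℂ).im)) t :=
  energy_identity_general A hherm hadd ψ hψreal γ t₀ T θ ρ θ' ρ' hθ heq horth
end
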